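/- Let γ > 0, let C ∈ ℝ^{N×N} be symmetric, let q ∈ ℝᴺ and φ ∈ ℝ, and suppose S ∈ ℝ^{N×N} is invertible with SᵀS = diag(σ₁, …, σ_N) and SᵀCS = diag(τ₁, …, τ_N). Then the robust constraint (for all w ∈ ℝᴺ with ‖w‖₂ ≤ γ: wᵀCw + 2qᵀw ≤ φ) holds if and only if there exist λ ≥ 0 and t ∈ ℝᴺ such that Σᵢ tᵢ + γ²λ ≤ φ and ((Sᵀq)ᵢ, tᵢ, λσᵢ − τᵢ) ∈ Q for every i ∈ {1, …, N}. -/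

import Mathlib

/-!
Substituting `w = S v` turns the robust constraint into a trust-region problem with diagonal data:
`∑ τᵢ vᵢ² + 2 rᵢ vᵢ ≤ φ` whenever `∑ σᵢ vᵢ² ≤ γ²`, where `r = Sᵀ q` and `σᵢ > 0`. Membership
`(rᵢ, tᵢ, λσᵢ - τᵢ) ∈ Q` means `rᵢ² ≤ tᵢ (λσᵢ - τᵢ)` with both factors nonnegative, so a certificate
is a Lagrangian dual bound, and one direction is weak duality (coordinatewise AM-GM). The converse
is strong duality (the S-lemma): from a KKT point `(λ, v)` the choice `tᵢ = (λσᵢ - τᵢ) vᵢ²` works.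
Let `λ₀` be the least admissible multiplier. If the secular function
`λ ↦ ∑ σᵢ (rᵢ / (λσᵢ - τᵢ))²`, which tends to `0` at infinity, reaches `γ²` on `(λ₀, ∞)`, the
intermediate value theorem yields the multiplier. Otherwise (the hard case) letting `λ ↓ λ₀` shows
that `rᵢ = 0` wherever `λ₀σᵢ = τᵢ`, and the maximizer at `λ₀` is padded along such a coordinate up
to the boundary of the ellipsoid.
-/

open Matrix

/-- The set `Q = {(x, y, z) ∈ ℝ³ : ‖(2x, y − z)‖₂ ≤ y + z}`. -/
def socQ : Set (ℝ × ℝ × ℝ) :=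
  {p | Real.sqrt (4 * p.1 ^ 2 + (p.2.1 - p.2.2) ^ 2) ≤ p.2.1 + p.2.2}

open Finset Filter Topology

lemma mem_socQ_iff (x y z : ℝ) : (x, y, z) ∈ socQ ↔ 0 ≤ y ∧ 0 ≤ z ∧ x ^ 2 ≤ y * z := by
  simp only [socQ, Set.mem_ofPred_eq]
  constructor
  · intro h
    have hyz : 0 ≤ y + z := (Real.sqrt_nonneg _).trans h
    have hsq : 4 * x ^ 2 + (y - z) ^ 2 ≤ (y + z) ^ 2 := (Real.sqrt_le_left hyz).1 h
    refine ⟨?_, ?_, ?_⟩ <;> nlinarith [sq_nonneg x]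
  · rintro ⟨hy, hz, hx⟩
    rw [Real.sqrt_le_left (by linarith)]
    nlinarith

lemma mul_sub_pos_of_le_mul {s t lam₀ lam : ℝ} (hs : 0 < s) (ht : t ≤ lam₀ * s)
    (hlam : lam₀ < lam) : 0 < lam * s - t := by
  nlinarith [mul_pos (sub_pos.2 hlam) hs]

lemma two_mul_mul_le_add_mul_sq {r t d : ℝ} (ht : 0 ≤ t) (hd : 0 ≤ d) (h : r ^ 2 ≤ t * d)
    (v : ℝ) : 2 * r * v ≤ t + d * v ^ 2 := by
  rcases ht.eq_or_lt with rfl | ht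
  · have hr : r = 0 := by nlinarith [sq_nonneg r]
    subst hr
    nlinarith [mul_nonneg hd (sq_nonneg v)]
  · have : 0 ≤ t * (t + d * v ^ 2 - 2 * r * v) := by
      nlinarith [sq_nonneg (t - r * v), mul_le_mul_of_nonneg_right h (sq_nonneg v)]
    linarith [nonneg_of_mul_nonneg_right this ht]

section TrustRegion

variable {ι : Type*} [Fintype ι] {σ τ r : ι → ℝ} {γ φ lam lam₀ : ℝ}

lemma robust_of_soc_certificate {t : ι → ℝ} (hlam : 0 ≤ lam)
    (hsum : ∑ i, t i + γ ^ 2 * lam ≤ φ) (hcert : ∀ i, (r i, t i, lam * σ i - τ i) ∈ socQ)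
    {v : ι → ℝ} (hv : ∑ i, σ i * v i ^ 2 ≤ γ ^ 2) :
    ∑ i, (τ i * v i ^ 2 + 2 * r i * v i) ≤ φ := by
  have hcoord : ∀ i, τ i * v i ^ 2 + 2 * r i * v i ≤ t i + lam * (σ i * v i ^ 2) := by
    intro i
    obtain ⟨ht, hd, hr⟩ := (mem_socQ_iff _ _ _).1 (hcert i)
    linarith [two_mul_mul_le_add_mul_sq ht hd hr (v i)]
  calc ∑ i, (τ i * v i ^ 2 + 2 * r i * v i)
      ≤ ∑ i, (t i + lam * (σ i * v i ^ 2)) := sum_le_sum fun i _ => hcoord i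
    _ = ∑ i, t i + lam * ∑ i, σ i * v i ^ 2 := by rw [sum_add_distrib, mul_sum]
    _ ≤ ∑ i, t i + γ ^ 2 * lam := by linarith [mul_le_mul_of_nonneg_left hv hlam]
    _ ≤ φ := hsum

/-- The KKT conditions, including the second-order condition `shifted_nonneg`, for maximizing
`∑ i, (τ i * v i ^ 2 + 2 * r i * v i)` over the ellipsoid `∑ i, σ i * v i ^ 2 ≤ γ ^ 2`. -/
structure IsKKTPoint (σ τ r : ι → ℝ) (γ lam : ℝ) (v : ι → ℝ) : Prop where
  multiplier_nonneg : 0 ≤ lam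
  shifted_nonneg : ∀ i, 0 ≤ lam * σ i - τ i
  stationary : ∀ i, (lam * σ i - τ i) * v i = r i
  feasible : ∑ i, σ i * v i ^ 2 ≤ γ ^ 2
  complementary : lam * ∑ i, σ i * v i ^ 2 = lam * γ ^ 2

lemma IsKKTPoint.exists_soc_certificate {v : ι → ℝ} (hv : IsKKTPoint σ τ r γ lam v)
    (H : ∀ v : ι → ℝ, ∑ i, σ i * v i ^ 2 ≤ γ ^ 2 → ∑ i, (τ i * v i ^ 2 + 2 * r i * v i) ≤ φ) :
    ∃ t : ι → ℝ, ∑ i, t i + γ ^ 2 * lam ≤ φ ∧ ∀ i, (r i, t i, lam * σ i - τ i) ∈ socQ := by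
  refine ⟨fun i => (lam * σ i - τ i) * v i ^ 2, ?_, fun i => ?_⟩
  · have hval : ∑ i, (τ i * v i ^ 2 + 2 * r i * v i)
        = ∑ i, (lam * σ i - τ i) * v i ^ 2 + lam * ∑ i, σ i * v i ^ 2 := by
      rw [mul_sum, ← sum_add_distrib]
      refine sum_congr rfl fun i _ => ?_
      rw [← hv.stationary i]
      ring
    have := H v hv.feasible
    rw [hval, hv.complementary] at this
    linarith
  · refine (mem_socQ_iff _ _ _).2
      ⟨mul_nonneg (hv.shifted_nonneg i) (sq_nonneg _), hv.shifted_nonneg i, le_of_eq ?_⟩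
    rw [← hv.stationary i]
    ring

/-- Maximizer of the Lagrangian `∑ i, (τ i * v i ^ 2 + 2 * r i * v i) - lam * ∑ i, σ i * v i ^ 2`
when every `lam * σ i - τ i` is positive. -/
noncomputable def lagrangianMaximizer (σ τ r : ι → ℝ) (lam : ℝ) (i : ι) : ℝ :=
  r i / (lam * σ i - τ i)

noncomputable def secular (σ τ r : ι → ℝ) (lam : ℝ) : ℝ :=
  ∑ i, σ i * lagrangianMaximizer σ τ r lam i ^ 2

lemma continuousAt_secular (h : ∀ i, lam * σ i - τ i = 0 → r i = 0) :
    ContinuousAt (secular σ τ r) lam := by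
  have hcoord : ∀ i, ContinuousAt (fun μ => lagrangianMaximizer σ τ r μ i) lam := by
    intro i
    by_cases hr : r i = 0
    · simp only [lagrangianMaximizer, hr, zero_div]
      exact continuousAt_const
    · exact continuousAt_const.div (by fun_prop) fun h0 => hr (h i h0)
  unfold secular
  fun_prop

lemma tendsto_secular_atTop (hσ : ∀ i, 0 < σ i) : Tendsto (secular σ τ r) atTop (𝓝 0) := by
  have hcoord : ∀ i, Tendsto (fun μ => lagrangianMaximizer σ τ r μ i) atTop (𝓝 0) := fun i =>
    tendsto_const_nhds.div_atTop <| by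
      simpa only [sub_eq_add_neg, id] using
        tendsto_atTop_add_const_right _ _ (tendsto_id.atTop_mul_const (hσ i))
  unfold secular
  simpa using tendsto_finsetSum univ fun i _ => ((hcoord i).pow 2).const_mul (σ i)

lemma exists_secular_eq (hσ : ∀ i, 0 < σ i) (hγ : 0 < γ) (hτ : ∀ i, τ i ≤ lam₀ * σ i)
    {μ : ℝ} (hμ : lam₀ < μ) (hG : γ ^ 2 ≤ secular σ τ r μ) :
    ∃ lam, lam₀ < lam ∧ secular σ τ r lam = γ ^ 2 := by
  obtain ⟨b, hb, hμb⟩ := (((tendsto_secular_atTop hσ).eventually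
    (gt_mem_nhds (pow_pos hγ 2))).and (eventually_ge_atTop μ)).exists
  have hcont : ContinuousOn (secular σ τ r) (Set.Icc μ b) := fun x hx =>
    (continuousAt_secular fun i h0 =>
      absurd h0 (mul_sub_pos_of_le_mul (hσ i) (hτ i) (hμ.trans_le hx.1)).ne').continuousWithinAt
  obtain ⟨lam, hlam, hGlam⟩ := intermediate_value_Icc' hμb hcont ⟨hb.le, hG⟩
  exact ⟨lam, hμ.trans_le hlam.1, hGlam⟩

lemma eq_zero_of_forall_secular_le (hσ : ∀ i, 0 < σ i)
    (hG : ∀ μ, lam₀ < μ → secular σ τ r μ ≤ γ ^ 2) {i : ι} (hi : lam₀ * σ i - τ i = 0) :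
    r i = 0 := by
  have hbound : ∀ μ ∈ Set.Ioi lam₀, σ i * r i ^ 2 ≤ (μ * σ i - τ i) ^ 2 * γ ^ 2 := by
    intro μ hμ
    have hterm : σ i * lagrangianMaximizer σ τ r μ i ^ 2 ≤ γ ^ 2 :=
      (single_le_sum (f := fun k => σ k * lagrangianMaximizer σ τ r μ k ^ 2)
        (fun k _ => mul_nonneg (hσ k).le (sq_nonneg _)) (mem_univ i)).trans (hG μ hμ)
    have hr : r i = (μ * σ i - τ i) * lagrangianMaximizer σ τ r μ i :=
      (mul_div_cancel_of_imp' fun h0 => absurd h0 (by nlinarith [hσ i, hμ.out])).symm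
    rw [hr]
    nlinarith [sq_nonneg (μ * σ i - τ i)]
  have hlim : Tendsto (fun μ => (μ * σ i - τ i) ^ 2 * γ ^ 2) (𝓝[>] lam₀) (𝓝 0) := by
    simpa [hi] using ((by fun_prop : Continuous fun μ => (μ * σ i - τ i) ^ 2 * γ ^ 2).tendsto
      lam₀).mono_left nhdsWithin_le_nhds
  have hle : σ i * r i ^ 2 ≤ 0 := ge_of_tendsto hlim (eventually_nhdsWithin_of_forall hbound)
  exact pow_eq_zero_iff two_ne_zero |>.1 <|
    le_antisymm (nonpos_of_mul_nonpos_right hle (hσ i)) (sq_nonneg _)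

lemma secular_le_of_forall_secular_le (hσ : ∀ i, 0 < σ i)
    (hG : ∀ μ, lam₀ < μ → secular σ τ r μ ≤ γ ^ 2) : secular σ τ r lam₀ ≤ γ ^ 2 :=
  le_of_tendsto ((continuousAt_secular fun _ hi =>
      eq_zero_of_forall_secular_le hσ hG hi).tendsto.mono_left nhdsWithin_le_nhds)
    (eventually_nhdsWithin_of_forall (s := Set.Ioi lam₀) hG)

lemma exists_least_multiplier (hσ : ∀ i, 0 < σ i) :
    ∃ lam₀, 0 ≤ lam₀ ∧ (∀ i, τ i ≤ lam₀ * σ i) ∧ (lam₀ = 0 ∨ ∃ j, lam₀ * σ j = τ j) := by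
  classical
  set M := insert 0 (univ.image fun i => τ i / σ i)
  have hM : M.Nonempty := insert_nonempty _ _
  refine ⟨M.max' hM, M.le_max' _ (mem_insert_self _ _), fun i => ?_, ?_⟩
  · rw [← div_le_iff₀ (hσ i)]
    exact M.le_max' _ (mem_insert_of_mem (mem_image_of_mem _ (mem_univ i)))
  · rcases mem_insert.1 (M.max'_mem hM) with h | h
    · exact Or.inl h
    · obtain ⟨j, -, hj⟩ := mem_image.1 h
      exact Or.inr ⟨j, by rw [← hj, div_mul_cancel₀ _ (hσ j).ne']⟩

lemma sum_mul_update_sq [DecidableEq ι] (σ v : ι → ℝ) {j : ι} (hj : v j = 0) (s : ℝ) :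
    ∑ i, σ i * Function.update v j s i ^ 2 = ∑ i, σ i * v i ^ 2 + σ j * s ^ 2 := by
  have hupd : ∀ i, σ i * Function.update v j s i ^ 2
      = Function.update (fun k => σ k * v k ^ 2) j (σ j * s ^ 2) i := fun i =>
    Function.apply_update (fun k x => σ k * x ^ 2) v j s i
  rw [sum_congr rfl fun i _ => hupd i, sum_update_of_mem (mem_univ j),
    sum_eq_add_sum_sdiff_singleton_of_mem (mem_univ j) (fun k => σ k * v k ^ 2), hj]
  ring

lemma isKKTPoint_lagrangianMaximizer (hlam : 0 ≤ lam) (hd : ∀ i, 0 < lam * σ i - τ i)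
    (hG : secular σ τ r lam = γ ^ 2) :
    IsKKTPoint σ τ r γ lam (lagrangianMaximizer σ τ r lam) where
  multiplier_nonneg := hlam
  shifted_nonneg i := (hd i).le
  stationary i := mul_div_cancel₀ _ (hd i).ne'
  feasible := hG.le
  complementary := by rw [← secular, hG]

/-- The hard case of the trust-region problem: the multiplier sits at the boundary `lam₀` of the
admissible ones, and the maximizer is padded along a coordinate `j` with `lam₀ * σ j = τ j`. -/
lemma exists_isKKTPoint_of_secular_le (hσ : ∀ i, 0 < σ i) (hlam₀ : 0 ≤ lam₀)
    (hd : ∀ i, 0 ≤ lam₀ * σ i - τ i) (hr : ∀ i, lam₀ * σ i - τ i = 0 → r i = 0)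
    (hG : secular σ τ r lam₀ ≤ γ ^ 2) (hboundary : lam₀ = 0 ∨ ∃ j, lam₀ * σ j = τ j) :
    ∃ v, IsKKTPoint σ τ r γ lam₀ v := by
  classical
  set v := lagrangianMaximizer σ τ r lam₀
  have hstat : ∀ i, (lam₀ * σ i - τ i) * v i = r i := fun i => mul_div_cancel_of_imp' (hr i)
  rcases hboundary with rfl | ⟨j, hj⟩
  · exact ⟨v, hlam₀, hd, hstat, hG, by simp⟩
  have hdj : lam₀ * σ j - τ j = 0 := sub_eq_zero.2 hj
  have hvj : v j = 0 := by simp [v, lagrangianMaximizer, hdj]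
  set s := √((γ ^ 2 - secular σ τ r lam₀) / σ j)
  have hs : σ j * s ^ 2 = γ ^ 2 - secular σ τ r lam₀ := by
    rw [Real.sq_sqrt (div_nonneg (sub_nonneg.2 hG) (hσ j).le), mul_div_cancel₀ _ (hσ j).ne']
  have hnorm : ∑ i, σ i * Function.update v j s i ^ 2 = γ ^ 2 := by
    rw [sum_mul_update_sq σ v hvj, hs, ← secular]
    ring
  refine ⟨Function.update v j s, hlam₀, hd, fun i => ?_, hnorm.le, by rw [hnorm]⟩
  rcases eq_or_ne i j with rfl | hij
  · rw [hdj, zero_mul, hr i hdj]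
  · rw [Function.update_of_ne hij, hstat i]

lemma exists_isKKTPoint (hσ : ∀ i, 0 < σ i) (hγ : 0 < γ) (τ r : ι → ℝ) :
    ∃ lam v, IsKKTPoint σ τ r γ lam v := by
  obtain ⟨lam₀, hlam₀, hτ, hboundary⟩ := exists_least_multiplier (τ := τ) hσ
  by_cases hA : ∃ μ, lam₀ < μ ∧ γ ^ 2 ≤ secular σ τ r μ
  · obtain ⟨μ, hμ, hGμ⟩ := hA
    obtain ⟨lam, hlam, hG⟩ := exists_secular_eq hσ hγ hτ hμ hGμ
    exact ⟨lam, _, isKKTPoint_lagrangianMaximizer (hlam₀.trans hlam.le)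
      (fun i => mul_sub_pos_of_le_mul (hσ i) (hτ i) hlam) hG⟩
  simp only [not_exists, not_and, not_le] at hA
  have hG : ∀ μ, lam₀ < μ → secular σ τ r μ ≤ γ ^ 2 := fun μ hμ => (hA μ hμ).le
  exact ⟨lam₀, exists_isKKTPoint_of_secular_le hσ hlam₀ (fun i => sub_nonneg.2 (hτ i))
    (fun _ hi => eq_zero_of_forall_secular_le hσ hG hi)
    (secular_le_of_forall_secular_le hσ hG) hboundary⟩

theorem robust_diagonal_iff_soc (hσ : ∀ i, 0 < σ i) (hγ : 0 < γ) :
    (∀ v : ι → ℝ, ∑ i, σ i * v i ^ 2 ≤ γ ^ 2 → ∑ i, (τ i * v i ^ 2 + 2 * r i * v i) ≤ φ) ↔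
      ∃ (lam : ℝ) (t : ι → ℝ), 0 ≤ lam ∧ ∑ i, t i + γ ^ 2 * lam ≤ φ ∧
        ∀ i, (r i, t i, lam * σ i - τ i) ∈ socQ := by
  constructor
  · intro H
    obtain ⟨lam, v, hv⟩ := exists_isKKTPoint hσ hγ τ r
    obtain ⟨t, ht⟩ := hv.exists_soc_certificate H
    exact ⟨lam, t, hv.multiplier_nonneg, ht⟩
  · rintro ⟨lam, t, hlam, hsum, hcert⟩ v hv
    exact robust_of_soc_certificate hlam hsum hcert hv

end TrustRegion

section ChangeOfVariables

variable {n : Type*} [Fintype n] [DecidableEq n]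

lemma mulVec_dotProduct_mulVec_mulVec_of_transpose_mul_mul_eq_diagonal {R : Type*}
    [CommSemiring R] {S M : Matrix n n R} {d : n → R} (h : Sᵀ * M * S = diagonal d) (v : n → R) :
    S *ᵥ v ⬝ᵥ M *ᵥ (S *ᵥ v) = ∑ i, d i * v i ^ 2 := by
  calc S *ᵥ v ⬝ᵥ M *ᵥ (S *ᵥ v) = v ⬝ᵥ (Sᵀ * M * S) *ᵥ v := by
        rw [← mulVec_mulVec, ← mulVec_mulVec, dotProduct_mulVec v Sᵀ, vecMul_transpose]
    _ = ∑ i, d i * v i ^ 2 := by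
        rw [h]
        simp only [dotProduct, mulVec_diagonal]
        exact sum_congr rfl fun i _ => by ring

lemma sum_mulVec_sq_of_transpose_mul_self_eq_diagonal {S : Matrix n n ℝ} {σ : n → ℝ}
    (h : Sᵀ * S = diagonal σ) (v : n → ℝ) : ∑ k, (S *ᵥ v) k ^ 2 = ∑ i, σ i * v i ^ 2 := by
  rw [← mulVec_dotProduct_mulVec_mulVec_of_transpose_mul_mul_eq_diagonal (S := S) (M := 1)
    (by rwa [Matrix.mul_one]) v, one_mulVec]
  exact sum_congr rfl fun k _ => sq _

lemma pos_of_transpose_mul_self_eq_diagonal {S : Matrix n n ℝ} (hS : IsUnit S) {σ : n → ℝ}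
    (h : Sᵀ * S = diagonal σ) (i : n) : 0 < σ i := by
  have hσ : ∑ k, (S *ᵥ Pi.single i 1) k ^ 2 = σ i := by
    rw [sum_mulVec_sq_of_transpose_mul_self_eq_diagonal h]
    simp [Pi.single_apply]
  have hne : S *ᵥ Pi.single i 1 ≠ 0 := fun h0 => by
    simpa using congrFun (mulVec_injective_iff_isUnit.2 hS (h0.trans (mulVec_zero S).symm)) i
  obtain ⟨k, hk⟩ := Function.ne_iff.1 hne
  rw [← hσ]
  exact sum_pos' (fun _ _ => sq_nonneg _) ⟨k, mem_univ k, pow_two_pos_of_ne_zero hk⟩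

lemma robust_iff_robust_diagonal {γ φ : ℝ} (hγ : 0 ≤ γ) {C S : Matrix n n ℝ} (hS : IsUnit S)
    {q σ τ : n → ℝ} (hSS : Sᵀ * S = diagonal σ) (hSC : Sᵀ * C * S = diagonal τ) :
    (∀ w : n → ℝ, √(∑ i, w i ^ 2) ≤ γ → w ⬝ᵥ C *ᵥ w + 2 * (q ⬝ᵥ w) ≤ φ) ↔
      ∀ v : n → ℝ, ∑ i, σ i * v i ^ 2 ≤ γ ^ 2 →
        ∑ i, (τ i * v i ^ 2 + 2 * (Sᵀ *ᵥ q) i * v i) ≤ φ := by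
  rw [(mulVec_surjective_iff_isUnit.2 hS).forall]
  refine forall_congr' fun v => ?_
  have hobj : S *ᵥ v ⬝ᵥ C *ᵥ (S *ᵥ v) + 2 * (q ⬝ᵥ S *ᵥ v)
      = ∑ i, (τ i * v i ^ 2 + 2 * (Sᵀ *ᵥ q) i * v i) := by
    rw [mulVec_dotProduct_mulVec_mulVec_of_transpose_mul_mul_eq_diagonal hSC, dotProduct_mulVec,
      ← mulVec_transpose, dotProduct, mul_sum, ← sum_add_distrib]
    exact sum_congr rfl fun i _ => by ring
  rw [Real.sqrt_le_left hγ, sum_mulVec_sq_of_transpose_mul_self_eq_diagonal hSS, hobj]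

end ChangeOfVariables

theorem robust_quadratic_ball_iff_soc_general {N : ℕ} (γ : ℝ) (hγ : 0 < γ)
    (C : Matrix (Fin N) (Fin N) ℝ) (q : Fin N → ℝ) (φ : ℝ)
    (S : Matrix (Fin N) (Fin N) ℝ) (hS : IsUnit S)
    (σ τ : Fin N → ℝ)
    (hSS : Sᵀ * S = Matrix.diagonal σ)
    (hSC : Sᵀ * C * S = Matrix.diagonal τ) :
    (∀ w : Fin N → ℝ, Real.sqrt (∑ i, w i ^ 2) ≤ γ →
        w ⬝ᵥ C.mulVec w + 2 * (q ⬝ᵥ w) ≤ φ) ↔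
      ∃ (lam : ℝ) (t : Fin N → ℝ), 0 ≤ lam ∧
        (∑ i, t i) + γ ^ 2 * lam ≤ φ ∧
        ∀ i : Fin N, ((Sᵀ.mulVec q) i, t i, lam * σ i - τ i) ∈ socQ := by
  rw [robust_iff_robust_diagonal hγ.le hS hSS hSC]
  exact robust_diagonal_iff_soc (pos_of_transpose_mul_self_eq_diagonal hS hSS) hγ

theorem robust_quadratic_ball_iff_soc {N : ℕ} (γ : ℝ) (hγ : 0 < γ)
    (C : Matrix (Fin N) (Fin N) ℝ) (hC : C.IsSymm) (q : Fin N → ℝ) (φ : ℝ)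
    (S : Matrix (Fin N) (Fin N) ℝ) (hS : IsUnit S)
    (σ τ : Fin N → ℝ)
    (hSS : Sᵀ * S = Matrix.diagonal σ)
    (hSC : Sᵀ * C * S = Matrix.diagonal τ) :
    (∀ w : Fin N → ℝ, Real.sqrt (∑ i, w i ^ 2) ≤ γ →
        w ⬝ᵥ C.mulVec w + 2 * (q ⬝ᵥ w) ≤ φ) ↔
      ∃ (lam : ℝ) (t : Fin N → ℝ), 0 ≤ lam ∧
        (∑ i, t i) + γ ^ 2 * lam ≤ φ ∧
        ∀ i : Fin N, ((Sᵀ.mulVec q) i, t i, lam * σ i - τ i) ∈ socQ :=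
  robust_quadratic_ball_iff_soc_general γ hγ C q φ S hS σ τ hSS hSC
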